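/- Let n1, n2 ≥ 2 and n3, n4 ≥ 4, and let a = √n3, b = √n4. Then for integers x1, x2, x3, x4', x5, not all zero, 3x1² + 2n1x2² + 2n2x3² + n3x4'² + n4x5² + (a·x4' + b·x5)² ≥ 3, where this quadratic form arises from the Gram matrix [[3,0,0,0,0],[0,2n1,0,0,0],[0,0,2n2,0,0],[0,0,0,2n3,√(n3n4)],[0,0,0,√(n3n4),2n4]] evaluated on the integer vector (x1,x2,x3,x4',x5). -/
import Mathlib

lemma one_le_sq_of_ne_zero {x : ℤ} (h : x ≠ 0) : 1 ≤ x ^ 2 := by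
  have := Int.one_le_abs h
  nlinarith [sq_abs x]

theorem stmt_4 (n1 n2 n3 n4 : ℤ) (h1 : 2 ≤ n1) (h2 : 2 ≤ n2) (h3 : 4 ≤ n3) (h4 : 4 ≤ n4)
    (x1 x2 x3 x4 x5 : ℤ)
    (hx : ¬(x1 = 0 ∧ x2 = 0 ∧ x3 = 0 ∧ x4 = 0 ∧ x5 = 0)) :
    (3 : ℝ) ≤ 3 * (x1 : ℝ) ^ 2 + 2 * (n1 : ℝ) * (x2 : ℝ) ^ 2 + 2 * (n2 : ℝ) * (x3 : ℝ) ^ 2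
        + (n3 : ℝ) * (x4 : ℝ) ^ 2 + (n4 : ℝ) * (x5 : ℝ) ^ 2
        + (Real.sqrt (n3 : ℝ) * (x4 : ℝ) + Real.sqrt (n4 : ℝ) * (x5 : ℝ)) ^ 2 := by
  have hs : (0:ℝ) ≤ (Real.sqrt (n3 : ℝ) * (x4 : ℝ) + Real.sqrt (n4 : ℝ) * (x5 : ℝ)) ^ 2 :=
    sq_nonneg _
  have key : (3:ℤ) ≤ 3 * x1 ^ 2 + 2 * n1 * x2 ^ 2 + 2 * n2 * x3 ^ 2 + n3 * x4 ^ 2 + n4 * x5 ^ 2 := by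
    rcases eq_or_ne x1 0 with e1 | e1
    · rcases eq_or_ne x2 0 with e2 | e2
      · rcases eq_or_ne x3 0 with e3 | e3
        · rcases eq_or_ne x4 0 with e4 | e4
          · rcases eq_or_ne x5 0 with e5 | e5
            · exact absurd ⟨e1, e2, e3, e4, e5⟩ hx
            · nlinarith [one_le_sq_of_ne_zero e5, sq_nonneg x1, sq_nonneg x2, sq_nonneg x3, sq_nonneg x4]
          · nlinarith [one_le_sq_of_ne_zero e4, sq_nonneg x1, sq_nonneg x2, sq_nonneg x3, sq_nonneg x5]
        · nlinarith [one_le_sq_of_ne_zero e3, sq_nonneg x1, sq_nonneg x2, sq_nonneg x4, sq_nonneg x5]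
      · nlinarith [one_le_sq_of_ne_zero e2, sq_nonneg x1, sq_nonneg x3, sq_nonneg x4, sq_nonneg x5]
    · nlinarith [one_le_sq_of_ne_zero e1, sq_nonneg x2, sq_nonneg x3, sq_nonneg x4, sq_nonneg x5]
  have key' : (3:ℝ) ≤ 3 * (x1:ℝ) ^ 2 + 2 * (n1:ℝ) * (x2:ℝ) ^ 2 + 2 * (n2:ℝ) * (x3:ℝ) ^ 2
      + (n3:ℝ) * (x4:ℝ) ^ 2 + (n4:ℝ) * (x5:ℝ) ^ 2 := by exact_mod_cast key
  linarith
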